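/- The quotient transition system Δ/≈ of an LTS Δ under branching bisimilarity has the same set of traces as Δ: trace(Δ) = trace(Δ/≈). -/
import Mathlib


/-- A finite (possibly empty) sequence of τ-transitions. -/
def TauSeq {S A : Type*} (tr : S → A → S → Prop) (τ : A) : S → S → Prop :=
  Relation.ReflTransGen (fun s s' => tr s τ s')

/-- `R` is a branching bisimulation on the LTS with transition relation `tr`
and silent action `τ`. -/
def IsBranchingBisim {S A : Type*} (tr : S → A → S → Prop) (τ : A)
    (R : S → S → Prop) : Prop :=
  (∀ s t, R s t → R t s) ∧
  ∀ s1 s2, R s1 s2 →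
    (∀ a s1', tr s1 a s1' → a ≠ τ →
      ∃ l s2', TauSeq tr τ s2 l ∧ tr l a s2' ∧ R s1 l ∧ R s1' s2') ∧
    (∀ s1', tr s1 τ s1' →
      R s1' s2 ∨ ∃ l s2', TauSeq tr τ s2 l ∧ tr l τ s2' ∧ R s1 l ∧ R s1' s2')

/-- Branching bisimilarity: the union of all branching bisimulations. -/
def BBisim {S A : Type*} (tr : S → A → S → Prop) (τ : A) (s t : S) : Prop :=
  ∃ R, IsBranchingBisim tr τ R ∧ R s t
/-- `HasTrace tr τ s w`: the finite sequence `w` of visible (non-τ) actions is a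
trace of state `s`, obtained from a path by omitting τ-actions. -/
inductive HasTrace {S A : Type*} (tr : S → A → S → Prop) (τ : A) : S → List A → Prop
  | nil : ∀ s, HasTrace tr τ s []
  | tau : ∀ {s s' w}, tr s τ s' → HasTrace tr τ s' w → HasTrace tr τ s w
  | vis : ∀ {s a s' w}, tr s a s' → a ≠ τ → HasTrace tr τ s' w → HasTrace tr τ s (a :: w)
/-- The ≈-equivalence class of a state. -/
def cls {S A : Type*} (tr : S → A → S → Prop) (τ : A) (s : S) : Set S :=
  {t | BBisim tr τ s t}

/-- The transition relation of the quotient transition system `Δ/≈`: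
visible transitions between classes are induced by all visible transitions,
while τ-transitions are only induced by τ-steps between non-bisimilar states. -/
def QTrans {S A : Type*} (tr : S → A → S → Prop) (τ : A) :
    Set S → A → Set S → Prop :=
  fun C a C' => ∃ s s', C = cls tr τ s ∧ C' = cls tr τ s' ∧ tr s a s' ∧
    (a = τ → ¬ BBisim tr τ s s')

section Aux
variable {S A : Type*} (tr : S → A → S → Prop) (τ : A)

/-- A semi-branching simulation clause. -/
def SemiSim (R : S → S → Prop) : Prop :=
  ∀ s1 s2, R s1 s2 →
    (∀ a s1', tr s1 a s1' → a ≠ τ →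
      ∃ l s2', TauSeq tr τ s2 l ∧ tr l a s2' ∧ R s1 l ∧ R s1' s2') ∧
    (∀ s1', tr s1 τ s1' →
      ∃ l s2', TauSeq tr τ s2 l ∧ (tr l τ s2' ∨ l = s2') ∧ R s1 l ∧ R s1' s2')

def IsSemiBisim (R : S → S → Prop) : Prop :=
  (∀ s t, R s t → R t s) ∧ SemiSim tr τ R

def SB (s t : S) : Prop := ∃ R, IsSemiBisim tr τ R ∧ R s t

variable {tr τ}

lemma branching_to_semi {R : S → S → Prop} (h : IsBranchingBisim tr τ R) :
    IsSemiBisim tr τ R := by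
  refine ⟨h.1, fun s1 s2 hR => ⟨(h.2 s1 s2 hR).1, fun s1' htr => ?_⟩⟩
  rcases (h.2 s1 s2 hR).2 s1' htr with h1 | ⟨l, s2', h1, h2, h3, h4⟩
  · exact ⟨s2, s2, Relation.ReflTransGen.refl, Or.inr rfl, hR, h1⟩
  · exact ⟨l, s2', h1, Or.inl h2, h3, h4⟩

lemma sb_symm {s t : S} (h : SB tr τ s t) : SB tr τ t s := by
  obtain ⟨R, hR, hst⟩ := h
  exact ⟨R, hR, hR.1 _ _ hst⟩

lemma sb_refl (s : S) : SB tr τ s s := by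
  refine ⟨Eq, branching_to_semi ?_, rfl⟩
  refine ⟨fun s t h => h.symm, fun s1 s2 h => ?_⟩
  subst h
  exact ⟨fun a s1' h1 h2 => ⟨s1, s1', Relation.ReflTransGen.refl, h1, rfl, rfl⟩,
    fun s1' h1 => Or.inr ⟨s1, s1', Relation.ReflTransGen.refl, h1, rfl, rfl⟩⟩

/-- matching of τ-sequences by a semi-branching simulation. -/
lemma tauseq_match {R : S → S → Prop} (h : SemiSim tr τ R) {s t s' : S}
    (hR : R s t) (hs : TauSeq tr τ s s') :
    ∃ t', TauSeq tr τ t t' ∧ R s' t' := by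
  induction hs with
  | refl => exact ⟨t, Relation.ReflTransGen.refl, hR⟩
  | tail _ hstep ih =>
    obtain ⟨m, hm, hRm⟩ := ih
    obtain ⟨l, m', h1, h2, _, h4⟩ := (h _ _ hRm).2 _ hstep
    rcases h2 with h2 | h2
    · exact ⟨m', (hm.trans h1).tail h2, h4⟩
    · exact ⟨l, hm.trans h1, h2 ▸ h4⟩

lemma semiSim_comp {R1 R2 : S → S → Prop} (h1 : SemiSim tr τ R1) (h2 : SemiSim tr τ R2) :
    SemiSim tr τ (fun a c => ∃ b, R1 a b ∧ R2 b c) := by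
  rintro s1 s3 ⟨s2, h12, h23⟩
  constructor
  · intro a s1' htr ha
    obtain ⟨l2, t2, hseq2, htr2, hA, hB⟩ := (h1 _ _ h12).1 a s1' htr ha
    obtain ⟨l3, hseq3, hl23⟩ := tauseq_match h2 h23 hseq2
    obtain ⟨m, t3, hseqm, htr3, hC, hD⟩ := (h2 _ _ hl23).1 a t2 htr2 ha
    exact ⟨m, t3, hseq3.trans hseqm, htr3, ⟨l2, hA, hC⟩, ⟨t2, hB, hD⟩⟩
  · intro s1' htr
    obtain ⟨l2, t2, hseq2, htr2, hA, hB⟩ := (h1 _ _ h12).2 s1' htr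
    obtain ⟨l3, hseq3, hl23⟩ := tauseq_match h2 h23 hseq2
    rcases htr2 with htr2 | rfl
    · obtain ⟨m, t3, hseqm, htr3, hC, hD⟩ := (h2 _ _ hl23).2 t2 htr2
      exact ⟨m, t3, hseq3.trans hseqm, htr3, ⟨l2, hA, hC⟩, ⟨t2, hB, hD⟩⟩
    · exact ⟨l3, l3, hseq3, Or.inr rfl, ⟨l2, hA, hl23⟩, ⟨l2, hB, hl23⟩⟩

lemma semiSim_union {R1 R2 : S → S → Prop} (h1 : SemiSim tr τ R1) (h2 : SemiSim tr τ R2) :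
    SemiSim tr τ (fun a b => R1 a b ∨ R2 a b) := by
  rintro s1 s2 (h | h)
  · refine ⟨fun a s1' ht hn => ?_, fun s1' ht => ?_⟩
    · obtain ⟨l, t, x1, x2, x3, x4⟩ := (h1 _ _ h).1 a s1' ht hn
      exact ⟨l, t, x1, x2, Or.inl x3, Or.inl x4⟩
    · obtain ⟨l, t, x1, x2, x3, x4⟩ := (h1 _ _ h).2 s1' ht
      exact ⟨l, t, x1, x2, Or.inl x3, Or.inl x4⟩
  · refine ⟨fun a s1' ht hn => ?_, fun s1' ht => ?_⟩
    · obtain ⟨l, t, x1, x2, x3, x4⟩ := (h2 _ _ h).1 a s1' ht hn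
      exact ⟨l, t, x1, x2, Or.inr x3, Or.inr x4⟩
    · obtain ⟨l, t, x1, x2, x3, x4⟩ := (h2 _ _ h).2 s1' ht
      exact ⟨l, t, x1, x2, Or.inr x3, Or.inr x4⟩

lemma sb_trans {s t u : S} (h1 : SB tr τ s t) (h2 : SB tr τ t u) : SB tr τ s u := by
  obtain ⟨R1, hR1, hst⟩ := h1
  obtain ⟨R2, hR2, htu⟩ := h2
  refine ⟨fun a c => (∃ b, R1 a b ∧ R2 b c) ∨ (∃ b, R2 a b ∧ R1 b c),
    ⟨?_, semiSim_union (semiSim_comp hR1.2 hR2.2) (semiSim_comp hR2.2 hR1.2)⟩,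
    Or.inl ⟨t, hst, htu⟩⟩
  rintro a c (⟨b, hab, hbc⟩ | ⟨b, hab, hbc⟩)
  · exact Or.inr ⟨b, hR2.1 _ _ hbc, hR1.1 _ _ hab⟩
  · exact Or.inl ⟨b, hR1.1 _ _ hbc, hR2.1 _ _ hab⟩

/-- SB is itself a semi-branching bisimulation. -/
lemma sb_isSemiBisim : IsSemiBisim tr τ (SB tr τ : S → S → Prop) := by
  refine ⟨fun s t => sb_symm, fun s1 s2 hsb => ?_⟩
  obtain ⟨R, hR, h12⟩ := hsb
  have toSB : ∀ {a b : S}, R a b → SB tr τ a b := fun h => ⟨R, hR, h⟩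
  refine ⟨fun a s1' ht hn => ?_, fun s1' ht => ?_⟩
  · obtain ⟨l, t, x1, x2, x3, x4⟩ := (hR.2 _ _ h12).1 a s1' ht hn
    exact ⟨l, t, x1, x2, toSB x3, toSB x4⟩
  · obtain ⟨l, t, x1, x2, x3, x4⟩ := (hR.2 _ _ h12).2 s1' ht
    exact ⟨l, t, x1, x2, toSB x3, toSB x4⟩

/-- SB is a branching bisimulation. -/
lemma sb_isBranchingBisim : IsBranchingBisim tr τ (SB tr τ : S → S → Prop) := by
  refine ⟨fun s t => sb_symm, fun s1 s2 h12 => ?_⟩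
  refine ⟨(sb_isSemiBisim.2 _ _ h12).1, fun s1' ht => ?_⟩
  obtain ⟨l, t, x1, x2, x3, x4⟩ := (sb_isSemiBisim.2 _ _ h12).2 s1' ht
  rcases x2 with x2 | rfl
  · exact Or.inr ⟨l, t, x1, x2, x3, x4⟩
  · exact Or.inl (sb_trans x4 (sb_trans (sb_symm x3) h12))

lemma bbisim_iff_sb {s t : S} : BBisim tr τ s t ↔ SB tr τ s t := by
  constructor
  · rintro ⟨R, hR, h⟩; exact ⟨R, branching_to_semi hR, h⟩
  · intro h; exact ⟨SB tr τ, sb_isBranchingBisim, h⟩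

lemma bbisim_refl (s : S) : BBisim tr τ s s := bbisim_iff_sb.2 (sb_refl s)
lemma bbisim_symm {s t : S} (h : BBisim tr τ s t) : BBisim tr τ t s :=
  bbisim_iff_sb.2 (sb_symm (bbisim_iff_sb.1 h))
lemma bbisim_trans {s t u : S} (h1 : BBisim tr τ s t) (h2 : BBisim tr τ t u) :
    BBisim tr τ s u :=
  bbisim_iff_sb.2 (sb_trans (bbisim_iff_sb.1 h1) (bbisim_iff_sb.1 h2))

end Aux



section Main
variable {S A : Type*} {tr : S → A → S → Prop} {τ : A}

lemma cls_eq_of_bbisim {s t : S} (h : BBisim tr τ s t) : cls tr τ s = cls tr τ t := by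
  ext u
  exact ⟨fun hu => bbisim_trans (bbisim_symm h) hu, fun hu => bbisim_trans h hu⟩

lemma bbisim_of_cls_eq {s t : S} (h : cls tr τ s = cls tr τ t) : BBisim tr τ s t := by
  have : t ∈ cls tr τ t := bbisim_refl t
  rw [← h] at this
  exact this

lemma hasTrace_of_tauseq {s t : S} {w : List A} (h : TauSeq tr τ s t)
    (ht : HasTrace tr τ t w) : HasTrace tr τ s w := by
  induction h using Relation.ReflTransGen.head_induction_on with
  | refl => exact ht
  | head hstep _ ih => exact HasTrace.tau hstep ih

lemma hasTrace_forward {s : S} {w : List A} (h : HasTrace tr τ s w) :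
    HasTrace (QTrans tr τ) τ (cls tr τ s) w := by
  induction h with
  | nil s => exact HasTrace.nil _
  | @tau s s' w hstep _ ih =>
    by_cases hb : BBisim tr τ s s'
    · rwa [cls_eq_of_bbisim hb]
    · exact HasTrace.tau ⟨s, s', rfl, rfl, hstep, fun _ => hb⟩ ih
  | @vis s a s' w hstep hne _ ih =>
    exact HasTrace.vis ⟨s, s', rfl, rfl, hstep, fun h => absurd h hne⟩ hne ih

lemma hasTrace_backward {C : Set S} {w : List A}
    (h : HasTrace (QTrans tr τ) τ C w) :
    ∀ t : S, C = cls tr τ t → HasTrace tr τ t w := by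
  induction h with
  | nil s => exact fun t _ => HasTrace.nil t
  | @tau C C' w hstep _ ih =>
    rintro t rfl
    obtain ⟨s, s', hC, hC', htr, hne⟩ := hstep
    have hts : BBisim tr τ t s := bbisim_of_cls_eq hC
    -- s simulates via t: use that SB is a branching bisimulation
    have hst : SB tr τ s t := sb_symm (bbisim_iff_sb.1 hts)
    rcases (sb_isBranchingBisim.2 s t hst).2 s' htr with h1 | ⟨l, t', h1, h2, h3, h4⟩
    · exact absurd (bbisim_trans (bbisim_symm hts) (bbisim_symm (bbisim_iff_sb.2 h1)))
        (hne rfl)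
    · refine hasTrace_of_tauseq h1 (HasTrace.tau h2 (ih t' ?_))
      rw [hC']
      exact cls_eq_of_bbisim (bbisim_iff_sb.2 h4)
  | @vis C a C' w hstep hna _ ih =>
    rintro t rfl
    obtain ⟨s, s', hC, hC', htr, _⟩ := hstep
    have hst : SB tr τ s t := sb_symm (bbisim_iff_sb.1 (bbisim_of_cls_eq hC))
    obtain ⟨l, t', h1, h2, _, h4⟩ := (sb_isBranchingBisim.2 s t hst).1 a s' htr hna
    refine hasTrace_of_tauseq h1 (HasTrace.vis h2 hna (ih t' ?_))
    rw [hC']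
    exact cls_eq_of_bbisim (bbisim_iff_sb.2 h4)

end Main


/-- The quotient transition system `Δ/≈` has the same set of traces as `Δ`. -/
theorem stmt7 {S A : Type*} (tr : S → A → S → Prop) (τ : A) (s0 : S) :
    ∀ w, HasTrace tr τ s0 w ↔ HasTrace (QTrans tr τ) τ (cls tr τ s0) w := by
  intro w
  exact ⟨hasTrace_forward, fun h => hasTrace_backward h s0 rfl⟩
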